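/- arXiv:2512.02249 — 3 statements merged into one kernel-verified Lean document; each statement's English description precedes it below -/
import Mathlib

section
/- Let G be a probability measure supported on a non-degenerate compact interval S ⊂ ℝ. Let {Θ_n}_{n∈ℕ} be a decreasing sequence of non-degenerate subintervals of S produced by the sequential barycenter construction (each Θ_{n+1} is one of the two pieces of Θ_n obtained by splitting Θ_n at its conditional G-barycenter). Then the Lebesgue measure |Θ_n| tends to 0 as n → ∞. -/
/-!
If the `Θ n` did not shrink to a Lebesgue-null set, their intersection `T` would be an interval
with interior `(A, C)`, `A < C`, charged by `μ` because it lies in the support. The barycenters of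
the `Θ n` converge to the barycenter of `T`, which lies strictly inside `(A, C)`. But no barycenter
of `Θ n` lies in `(A, C)`: the next piece `Θ (n + 1) ⊇ T` lies on one side of it.
-/

open MeasureTheory Set

/-- The (topological) support of a measure on ℝ. -/
def msupport (μ : Measure ℝ) : Set ℝ := {x | ∀ U ∈ nhds x, μ U ≠ 0}

/-- Conditional barycenter of a measure on a set. -/
noncomputable def condBary (μ : Measure ℝ) (A : Set ℝ) : ℝ :=
  (∫ x in A, x ∂μ) / (μ A).toReal

open Filter Topology

lemma condBary_lt_of_subset_Iic {μ : Measure ℝ} [IsFiniteMeasure μ] {s : Set ℝ} {c : ℝ}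
    (hint : IntegrableOn (fun x => x) s μ) (hsc : s ⊆ Iic c) (hpos : μ (s \ {c}) ≠ 0) :
    condBary μ s < c := by
  have hμs : 0 < μ.real s :=
    ENNReal.toReal_pos (ne_bot_of_le_ne_bot hpos (measure_mono sdiff_subset)) (measure_ne_top μ s)
  have hgap : 0 < ∫ x in s, (c - x) ∂μ := by
    refine (setIntegral_pos_iff_support_of_nonneg_ae ?_ ((integrable_const c).sub hint)).2 ?_
    · exact ae_restrict_of_ae_restrict_of_subset hsc
        (ae_restrict_of_forall_mem measurableSet_Iic fun x hx => sub_nonneg.2 hx)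
    · exact (pos_iff_ne_zero.2 hpos).trans_le
        (measure_mono fun x hx => ⟨sub_ne_zero.2 (Ne.symm hx.2), hx.1⟩)
  rw [integral_sub (integrable_const c) hint, setIntegral_const, smul_eq_mul] at hgap
  show (∫ x in s, x ∂μ) / μ.real s < c
  rw [div_lt_iff₀ hμs]
  linarith

lemma lt_condBary_of_subset_Ici {μ : Measure ℝ} [IsFiniteMeasure μ] {s : Set ℝ} {a : ℝ}
    (hint : IntegrableOn (fun x => x) s μ) (has : s ⊆ Ici a) (hpos : μ (s \ {a}) ≠ 0) :
    a < condBary μ s := by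
  have hμs : 0 < μ.real s :=
    ENNReal.toReal_pos (ne_bot_of_le_ne_bot hpos (measure_mono sdiff_subset)) (measure_ne_top μ s)
  have hgap : 0 < ∫ x in s, (x - a) ∂μ := by
    refine (setIntegral_pos_iff_support_of_nonneg_ae ?_ (hint.sub (integrable_const a))).2 ?_
    · exact ae_restrict_of_ae_restrict_of_subset has
        (ae_restrict_of_forall_mem measurableSet_Ici fun x hx => sub_nonneg.2 hx)
    · exact (pos_iff_ne_zero.2 hpos).trans_le
        (measure_mono fun x hx => ⟨sub_ne_zero.2 hx.2, hx.1⟩)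
  rw [integral_sub hint (integrable_const a), setIntegral_const, smul_eq_mul] at hgap
  show a < (∫ x in s, x ∂μ) / μ.real s
  rw [lt_div_iff₀ hμs]
  linarith

lemma condBary_mem_Ioo_csInf_csSup {μ : Measure ℝ} [IsFiniteMeasure μ] {s : Set ℝ}
    (hbdd : Bornology.IsBounded s) (hint : IntegrableOn (fun x => x) s μ)
    (hpos : μ (s ∩ Ioo (sInf s) (sSup s)) ≠ 0) :
    condBary μ s ∈ Ioo (sInf s) (sSup s) :=
  ⟨lt_condBary_of_subset_Ici hint (fun _ hx => csInf_le hbdd.bddBelow hx)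
      (ne_bot_of_le_ne_bot hpos (measure_mono fun _ hx => ⟨hx.1, hx.2.1.ne'⟩)),
    condBary_lt_of_subset_Iic hint (fun _ hx => le_csSup hbdd.bddAbove hx)
      (ne_bot_of_le_ne_bot hpos (measure_mono fun _ hx => ⟨hx.1, hx.2.2.ne⟩))⟩

lemma tendsto_condBary_iInter {μ : Measure ℝ} [IsFiniteMeasure μ] {s : ℕ → Set ℝ}
    (hs : ∀ n, MeasurableSet (s n)) (hanti : Antitone s)
    (hint : IntegrableOn (fun x => x) (s 0) μ) (hpos : μ (⋂ n, s n) ≠ 0) :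
    Tendsto (fun n => condBary μ (s n)) atTop (𝓝 (condBary μ (⋂ n, s n))) :=
  (tendsto_setIntegral_of_antitone hs hanti ⟨0, hint⟩).div
    ((ENNReal.tendsto_toReal (measure_ne_top μ _)).comp
      (tendsto_measure_iInter_atTop (fun n => (hs n).nullMeasurableSet) hanti
        ⟨0, measure_ne_top μ _⟩))
    (ENNReal.toReal_ne_zero.2 ⟨hpos, measure_ne_top μ _⟩)

lemma IsOpen.measure_pos_of_subset_msupport {μ : Measure ℝ} {U : Set ℝ} (hU : IsOpen U)
    (hne : U.Nonempty) (hsupp : U ⊆ msupport μ) : 0 < μ U :=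
  let ⟨_, hx⟩ := hne
  pos_iff_ne_zero.2 (hsupp hx U (hU.mem_nhds hx))

lemma Real.csInf_lt_csSup_of_volume_ne_zero {s : Set ℝ} (hbdd : Bornology.IsBounded s)
    (hs : volume s ≠ 0) : sInf s < sSup s := by
  by_contra! h
  exact hs (measure_mono_null hbdd.subset_Icc_sInf_sSup
    (by rw [Real.volume_Icc, ENNReal.ofReal_eq_zero]; linarith))

lemma notMem_Ioo_csInf_csSup_of_subset_Iic_or_Ioi {α : Type*} [ConditionallyCompleteLinearOrder α]
    {s : Set α} {b : α} (hs : s.Nonempty) (h : s ⊆ Iic b ∨ s ⊆ Ioi b) :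
    b ∉ Ioo (sInf s) (sSup s) := by
  rintro ⟨hlo, hhi⟩
  rcases h with h | h
  · obtain ⟨q, hq, hbq⟩ := exists_lt_of_lt_csSup hs hhi
    exact (h hq).not_gt hbq
  · obtain ⟨p, hp, hpb⟩ := exists_lt_of_csInf_lt hs hlo
    exact (h hp).not_gt hpb

theorem stmt_3_general (μ : Measure ℝ) [IsProbabilityMeasure μ] (S : Set ℝ)
    (hsupp : msupport μ = S) (hScomp : IsCompact S)
    (Θ : ℕ → Set ℝ) (hsub : ∀ n, Θ n ⊆ S)
    (hconn : ∀ n, (Θ n).OrdConnected)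
    (hsplit : ∀ n, Θ (n + 1) = Θ n ∩ Set.Iic (condBary μ (Θ n)) ∨
                   Θ (n + 1) = Θ n ∩ Set.Ioi (condBary μ (Θ n))) :
    Filter.Tendsto (fun n => volume (Θ n)) Filter.atTop (nhds 0) := by
  have hanti : Antitone Θ := antitone_nat_of_succ_le fun n => by
    rcases hsplit n with h | h <;> rw [h] <;> exact inter_subset_left
  have hmeas : ∀ n, MeasurableSet (Θ n) := fun n => (hconn n).measurableSet
  set T := ⋂ n, Θ n
  have hTS : T ⊆ S := (iInter_subset Θ 0).trans (hsub 0)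
  have hTbdd : Bornology.IsBounded T := hScomp.isBounded.subset hTS
  have hvol : Tendsto (fun n => volume (Θ n)) atTop (𝓝 (volume T)) :=
    tendsto_measure_iInter_atTop (fun n => (hmeas n).nullMeasurableSet) hanti
      ⟨0, (hScomp.isBounded.subset (hsub 0)).measure_lt_top.ne⟩
  suffices volume T = 0 by rwa [this] at hvol
  by_contra hT
  have hTne : T.Nonempty := nonempty_of_measure_ne_zero hT
  have hIoo : Ioo (sInf T) (sSup T) ⊆ T :=
    IsConnected.Ioo_csInf_csSup_subset ⟨hTne, (ordConnected_iInter hconn).isPreconnected⟩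
      hTbdd.bddBelow hTbdd.bddAbove
  have hμIoo : 0 < μ (Ioo (sInf T) (sSup T)) :=
    isOpen_Ioo.measure_pos_of_subset_msupport
      (nonempty_Ioo.2 (Real.csInf_lt_csSup_of_volume_ne_zero hTbdd hT)) (hsupp ▸ hIoo.trans hTS)
  have hint : IntegrableOn (fun x => x) S μ := continuousOn_id.integrableOn_compact hScomp
  have hbary := condBary_mem_Ioo_csInf_csSup hTbdd (hint.mono_set hTS)
    (by rw [inter_eq_right.2 hIoo]; exact hμIoo.ne')
  obtain ⟨n, hn⟩ := ((tendsto_condBary_iInter hmeas hanti (hint.mono_set (hsub 0))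
    (ne_bot_of_le_ne_bot hμIoo.ne' (measure_mono hIoo))).eventually
      (isOpen_Ioo.mem_nhds hbary)).exists
  refine notMem_Ioo_csInf_csSup_of_subset_Iic_or_Ioi hTne ?_ hn
  have hTsucc : T ⊆ Θ (n + 1) := iInter_subset Θ (n + 1)
  rcases hsplit n with h | h
  · exact .inl (hTsucc.trans (h ▸ inter_subset_right))
  · exact .inr (hTsucc.trans (h ▸ inter_subset_right))

/-- Let `G` be a probability measure supported on a non-degenerate compact interval `S ⊆ ℝ`,
and let `{Θ_n}` be a decreasing sequence of non-degenerate subintervals of `S` produced by the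
sequential barycenter construction (each `Θ_{n+1}` is one of the two pieces of `Θ_n` obtained by
splitting at the conditional barycenter). Then the Lebesgue measure `|Θ_n|` tends to `0`. -/
theorem stmt_3 (μ : Measure ℝ) [IsProbabilityMeasure μ] (S : Set ℝ)
    (hsupp : msupport μ = S) (hScomp : IsCompact S) (hSconn : S.OrdConnected)
    (hSnd : (interior S).Nonempty)
    (Θ : ℕ → Set ℝ) (hsub : ∀ n, Θ n ⊆ S)
    (hconn : ∀ n, (Θ n).OrdConnected)
    (hnd : ∀ n, (interior (Θ n)).Nonempty)
    (hpos : ∀ n, 0 < μ (Θ n))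
    (hsplit : ∀ n, Θ (n + 1) = Θ n ∩ Set.Iic (condBary μ (Θ n)) ∨
                   Θ (n + 1) = Θ n ∩ Set.Ioi (condBary μ (Θ n))) :
    Filter.Tendsto (fun n => volume (Θ n)) Filter.atTop (nhds 0) :=
  stmt_3_general μ S hsupp hScomp Θ hsub hconn hsplit
end

section
/- Fix 0 < δ < 1 and ε > 0 with ε(1+ε)² < min{δ, 1−δ}. Let G be a probability measure on a compact interval, let T ⊂ T' be nested non-degenerate compact intervals with G(T) > 0, G(T') ≤ (1+ε)G(T), and |T'| ≤ (1+ε)|T|, and suppose the conditional barycenter μ of G on T satisfies (μ − inf T)/|T| = δ. Then the conditional barycenter μ' of G restricted to T' satisfies inf T < μ' < sup T, i.e., μ' belongs to T. -/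
open MeasureTheory Set

/-!
Write `T = [a, b]`, `T' = [c, d]`, `m = G(T)` and `s = G(T' \ T) ≤ ε m`. The barycenter of `T'` is
the weighted mean of `μ_T = a + δ |T|` (weight `m`) and of mass `s` carried by `T' \ T ⊆ [c, d]`.
Since `a - c ≤ ε |T|`, that extra mass pulls the barycenter below `μ_T` by at most
`(a - c) s / m ≤ ε² |T|`, which is less than the distance `δ |T|` from `μ_T` to `a`;
symmetrically on the right with `d - b ≤ ε |T|` and `1 - δ`.
-/

lemma condBary_eq_of_subset {μ : Measure ℝ} [IsFiniteMeasure μ] {A B : Set ℝ}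
    (hA : MeasurableSet A) (hAB : A ⊆ B) (hB : IntegrableOn (fun x => x) B μ) (hA0 : μ A ≠ 0) :
    condBary μ B =
      (μ.real A * condBary μ A + ∫ x in B \ A, x ∂μ) / (μ.real A + μ.real (B \ A)) := by
  have hA0' : μ.real A ≠ 0 := (ENNReal.toReal_pos hA0 (measure_ne_top μ A)).ne'
  simp only [condBary, ← measureReal_def, mul_div_cancel₀ _ hA0',
    setIntegral_sdiff hA hB hAB, measureReal_sdiff hAB hA (measure_ne_top μ B), add_sub_cancel]

lemma mul_measureReal_le_setIntegral_id_le_mul {μ : Measure ℝ} [IsFiniteMeasure μ] {S : Set ℝ} {c d : ℝ}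
    (hS : MeasurableSet S) (hSI : S ⊆ Icc c d) :
    c * μ.real S ≤ ∫ x in S, x ∂μ ∧ ∫ x in S, x ∂μ ≤ d * μ.real S := by
  have hint : IntegrableOn (fun x => x) S μ := continuous_id.integrableOn_Icc.mono_set hSI
  refine ⟨setIntegral_ge_of_const_le_real hS (measure_ne_top _ _) (fun x hx => (hSI hx).1) hint, ?_⟩
  calc ∫ x in S, x ∂μ ≤ ∫ _ in S, d ∂μ :=
        setIntegral_mono_on hint (integrableOn_const (measure_ne_top _ _)) hS
          (fun x hx => (hSI hx).2)
    _ = d * μ.real S := by rw [setIntegral_const, smul_eq_mul, mul_comm]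

lemma mul_lt_of_le_mul_of_sq_lt {p s L m ε t : ℝ} (hp0 : 0 ≤ p) (hp : p ≤ ε * L) (hs0 : 0 ≤ s)
    (hs : s ≤ ε * m) (hL : 0 < L) (hm : 0 < m) (hε : ε * ε < t) : p * s < t * (L * m) :=
  calc p * s ≤ (ε * L) * (ε * m) := mul_le_mul hp hs hs0 (hp0.trans hp)
    _ = ε * ε * (L * m) := by ring
    _ < t * (L * m) := mul_lt_mul_of_pos_right hε (mul_pos hL hm)

theorem stmt_4_general (δ ε : ℝ) (hε : 0 < ε)
    (hcond : ε * (1 + ε) ^ 2 < min δ (1 - δ))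
    (μ : Measure ℝ) [IsProbabilityMeasure μ]
    (a b c d : ℝ) (hca : c ≤ a) (hab : a < b) (hbd : b ≤ d)
    (hGT : 0 < μ (Set.Icc a b))
    (hG' : (μ (Set.Icc c d)).toReal ≤ (1 + ε) * (μ (Set.Icc a b)).toReal)
    (hlen : d - c ≤ (1 + ε) * (b - a))
    (hδdef : (condBary μ (Set.Icc a b) - a) / (b - a) = δ) :
    a < condBary μ (Set.Icc c d) ∧ condBary μ (Set.Icc c d) < b := by
  obtain ⟨hεδ, hε1δ⟩ : ε * ε < δ ∧ ε * ε < 1 - δ :=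
    lt_min_iff.1 (lt_of_le_of_lt (by nlinarith) hcond)
  have hL : 0 < b - a := sub_pos.2 hab
  have hT : Icc a b ⊆ Icc c d := Icc_subset_Icc hca hbd
  have hm : 0 < μ.real (Icc a b) := ENNReal.toReal_pos hGT.ne' (measure_ne_top μ _)
  have hs : μ.real (Icc c d \ Icc a b) ≤ ε * μ.real (Icc a b) := by
    rw [measureReal_sdiff hT measurableSet_Icc]
    linarith [show μ.real (Icc c d) ≤ (1 + ε) * μ.real (Icc a b) from hG']
  have hx : condBary μ (Icc a b) = a + δ * (b - a) := by
    rw [div_eq_iff hL.ne'] at hδdef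
    linarith
  obtain ⟨hJc, hJd⟩ := mul_measureReal_le_setIntegral_id_le_mul (μ := μ)
    (measurableSet_Icc.diff measurableSet_Icc) (sdiff_subset (s := Icc c d) (t := Icc a b))
  have hleft := mul_lt_of_le_mul_of_sq_lt (sub_nonneg.2 hca) (by linarith) measureReal_nonneg hs
    hL hm hεδ
  have hright := mul_lt_of_le_mul_of_sq_lt (sub_nonneg.2 hbd) (by linarith) measureReal_nonneg hs
    hL hm hε1δ
  rw [condBary_eq_of_subset measurableSet_Icc hT continuous_id.integrableOn_Icc hGT.ne', hx,
    lt_div_iff₀ (by positivity), div_lt_iff₀ (by positivity)]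
  constructor <;> linarith

/-- Fix `0 < δ < 1` and `ε > 0` with `ε(1+ε)² < min{δ, 1−δ}`. Let `G` be a probability measure
on a compact interval, `T = [a,b] ⊆ T' = [c,d]` nested non-degenerate compact intervals with
`G(T) > 0`, `G(T') ≤ (1+ε)G(T)` and `|T'| ≤ (1+ε)|T|`, and suppose the conditional barycenter
`μ_T` satisfies `(μ_T − inf T)/|T| = δ`. Then the conditional barycenter of `G` on `T'`
lies strictly between `inf T` and `sup T`, i.e. it belongs to `T`. -/
theorem stmt_4 (δ ε : ℝ) (hδ0 : 0 < δ) (hδ1 : δ < 1) (hε : 0 < ε)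
    (hcond : ε * (1 + ε) ^ 2 < min δ (1 - δ))
    (μ : Measure ℝ) [IsProbabilityMeasure μ]
    (u v : ℝ) (hμuv : μ ((Set.Icc u v)ᶜ) = 0)
    (a b c d : ℝ) (hca : c ≤ a) (hab : a < b) (hbd : b ≤ d)
    (hGT : 0 < μ (Set.Icc a b))
    (hG' : (μ (Set.Icc c d)).toReal ≤ (1 + ε) * (μ (Set.Icc a b)).toReal)
    (hlen : d - c ≤ (1 + ε) * (b - a))
    (hδdef : (condBary μ (Set.Icc a b) - a) / (b - a) = δ) :
    a < condBary μ (Set.Icc c d) ∧ condBary μ (Set.Icc c d) < b :=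
  stmt_4_general δ ε hε hcond μ a b c d hca hab hbd hGT hG' hlen hδdef
end

section
/- Let f₀ and f be probability densities on a Borel set Y ⊆ ℝ and let K ⊂ Y be measurable. Then the squared Hellinger distance satisfies H(f₀,f)² ≤ 2(∫_{Y∖K} f₀ dy)^{1/2} + (∫_K |f₀ − f| dy)^{1/2}. -/
open MeasureTheory Set Real

/-- Let `f₀` and `f` be probability densities on a Borel set `Y ⊆ ℝ` and let `K ⊆ Y` be
measurable. Then the squared Hellinger distance satisfies
`H(f₀,f)² ≤ 2(∫_{Y∖K} f₀)^{1/2} + (∫_K |f₀ − f|)^{1/2}`. -/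
theorem stmt_15 (Y : Set ℝ) (hY : MeasurableSet Y)
    (K : Set ℝ) (hK : MeasurableSet K) (hKY : K ⊆ Y)
    (f₀ f : ℝ → ℝ) (hm₀ : Measurable f₀) (hm : Measurable f)
    (h₀0 : ∀ y, 0 ≤ f₀ y) (h0 : ∀ y, 0 ≤ f y)
    (hi₀ : Integrable f₀ (volume.restrict Y)) (hi : Integrable f (volume.restrict Y))
    (h₀1 : ∫ y in Y, f₀ y = 1) (h1 : ∫ y in Y, f y = 1) :
    (1 / 2) * ∫ y in Y, (Real.sqrt (f₀ y) - Real.sqrt (f y)) ^ 2 ≤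
      2 * Real.sqrt (∫ y in Y \ K, f₀ y) + Real.sqrt (∫ y in K, |f₀ y - f y|) := by
  set g : ℝ → ℝ := fun y => (Real.sqrt (f₀ y) - Real.sqrt (f y)) ^ 2 with hg
  have hgm : Measurable g := (hm₀.sqrt.sub hm.sqrt).pow_const 2
  -- pointwise bounds
  have p1 : ∀ y, g y ≤ f₀ y + f y := by
    intro y
    have s0 := Real.sq_sqrt (h₀0 y)
    have s1 := Real.sq_sqrt (h0 y)
    have n0 := Real.sqrt_nonneg (f₀ y)
    have n1 := Real.sqrt_nonneg (f y)
    simp only [hg]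
    nlinarith [mul_nonneg n0 n1]
  have p2 : ∀ y, g y ≤ |f₀ y - f y| := by
    intro y
    have s0 := Real.sq_sqrt (h₀0 y)
    have s1 := Real.sq_sqrt (h0 y)
    have n0 := Real.sqrt_nonneg (f₀ y)
    have n1 := Real.sqrt_nonneg (f y)
    simp only [hg]
    rcases le_total (f y) (f₀ y) with h | h
    · have hs : Real.sqrt (f y) ≤ Real.sqrt (f₀ y) := Real.sqrt_le_sqrt h
      rw [abs_of_nonneg (by linarith)]
      nlinarith [mul_le_mul_of_nonneg_left hs n1]
    · have hs : Real.sqrt (f₀ y) ≤ Real.sqrt (f y) := Real.sqrt_le_sqrt h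
      rw [abs_of_nonpos (by linarith)]
      nlinarith [mul_le_mul_of_nonneg_left hs n0]
  have hg0 : ∀ y, 0 ≤ g y := fun y => sq_nonneg _
  have hiadd : Integrable (fun y => f₀ y + f y) (volume.restrict Y) := hi₀.add hi
  have hgi : IntegrableOn g Y := by
    refine hiadd.mono' hgm.aestronglyMeasurable ?_
    filter_upwards with y
    rw [Real.norm_of_nonneg (hg0 y)]
    exact p1 y
  have hDK : MeasurableSet (Y \ K) := hY.diff hK
  have hi₀K : IntegrableOn f₀ K := IntegrableOn.mono_set hi₀ hKY
  have hiK' : IntegrableOn f K := IntegrableOn.mono_set hi hKY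
  have habs : IntegrableOn (fun y => |f₀ y - f y|) K := IntegrableOn.mono_set ((hi₀.sub hi).abs) hKY
  -- split integrals
  have hsplit₀ : ∫ y in Y \ K, f₀ y = (∫ y in Y, f₀ y) - ∫ y in K, f₀ y :=
    integral_diff hK hi₀ hKY
  have hsplit : ∫ y in Y \ K, f y = (∫ y in Y, f y) - ∫ y in K, f y :=
    integral_diff hK hi hKY
  have hsplitg : ∫ y in Y \ K, g y = (∫ y in Y, g y) - ∫ y in K, g y :=
    integral_diff hK hgi hKY
  set A := ∫ y in Y \ K, f₀ y with hA
  set B := ∫ y in K, |f₀ y - f y| with hB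
  have hA0 : 0 ≤ A := setIntegral_nonneg hDK (fun y _ => h₀0 y)
  have hB0 : 0 ≤ B := setIntegral_nonneg hK (fun y _ => abs_nonneg _)
  have hK₀0 : 0 ≤ ∫ y in K, f₀ y := setIntegral_nonneg hK (fun y _ => h₀0 y)
  have hAeq : A = 1 - ∫ y in K, f₀ y := by rw [hsplit₀, h₀1]
  have hA1 : A ≤ 1 := by linarith
  -- bound on Y \ K part
  have b1 : ∫ y in Y \ K, g y ≤ ∫ y in Y \ K, (f₀ y + f y) := by
    exact setIntegral_mono_on (IntegrableOn.mono_set hgi diff_subset) (IntegrableOn.mono_set hiadd diff_subset) hDK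
      (fun y _ => p1 y)
  -- bound on K part
  have b2 : ∫ y in K, g y ≤ B := by
    exact setIntegral_mono_on (IntegrableOn.mono_set hgi hKY) habs hK (fun y _ => p2 y)
  have hKdiff : (∫ y in K, f₀ y) - (∫ y in K, f y) ≤ B := by
    rw [hB, ← integral_sub hi₀K hiK']
    exact setIntegral_mono_on (hi₀K.sub hiK') habs hK (fun y _ => le_abs_self _)
  have haddsplit : ∫ y in Y \ K, (f₀ y + f y) =
      A + ((∫ y in Y, f y) - ∫ y in K, f y) := by
    rw [integral_add (IntegrableOn.mono_set hi₀ diff_subset) (IntegrableOn.mono_set hi diff_subset), hsplit]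
  -- main bound: ∫_Y g ≤ 2A + 2B
  have main : ∫ y in Y, g y ≤ 2 * A + 2 * B := by
    have h2 : (∫ y in Y, f y) - ∫ y in K, f y ≤ A + B := by
      rw [h1]; linarith
    calc ∫ y in Y, g y = (∫ y in Y \ K, g y) + ∫ y in K, g y := by rw [hsplitg]; ring
      _ ≤ (A + ((∫ y in Y, f y) - ∫ y in K, f y)) + B := by
          rw [← haddsplit]; exact add_le_add b1 b2
      _ ≤ 2 * A + 2 * B := by linarith
  have bound1 : ∫ y in Y, g y ≤ 2 := by
    calc ∫ y in Y, g y ≤ ∫ y in Y, (f₀ y + f y) :=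
          setIntegral_mono_on hgi hiadd hY (fun y _ => p1 y)
      _ = 2 := by rw [integral_add hi₀ hi, h₀1, h1]; norm_num
  -- x ≤ √x for x ∈ [0,1]
  have sqle : ∀ x : ℝ, 0 ≤ x → x ≤ 1 → x ≤ Real.sqrt x := by
    intro x hx hx1
    have h1' : Real.sqrt x ≤ 1 := by
      rw [← Real.sqrt_one]; exact Real.sqrt_le_sqrt hx1
    nlinarith [Real.sq_sqrt hx, Real.sqrt_nonneg x]
  have hsA : A ≤ Real.sqrt A := sqle A hA0 hA1
  have hsqA0 : 0 ≤ Real.sqrt A := Real.sqrt_nonneg A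
  rcases le_total B 1 with hB1 | hB1
  · have hsB : B ≤ Real.sqrt B := sqle B hB0 hB1
    linarith
  · have : (1 : ℝ) ≤ Real.sqrt B := by
      rw [show (1:ℝ) = Real.sqrt 1 by simp]
      exact Real.sqrt_le_sqrt hB1
    linarith
end
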